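/- Let X be a minimal shift space and let η : ℕ → ℕ be a non-decreasing function with η(n) → ∞ as n → ∞. Then X has a string attractor Γ such that #(Γ ∩ [−n, n]) ≤ η(n) for all n ∈ ℕ. -/

import Mathlib

open scoped ENat Classical

/-- The length-`n` factor of the bi-infinite word `x` starting at position `i`. -/
def subwordZ {A : Type*} (x : ℤ → A) (i : ℤ) (n : ℕ) : List A :=
  (List.range n).map fun j => x (i + (j : ℤ))

/-- `w` occurs in `x` at position `i`. -/
def occursAt {A : Type*} (x : ℤ → A) (w : List A) (i : ℤ) : Prop :=
  subwordZ x i w.length = w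

/-- `w` is a factor of the bi-infinite word `x`. -/
def IsFactorZ {A : Type*} (x : ℤ → A) (w : List A) : Prop :=
  ∃ i : ℤ, occursAt x w i

/-- `Γ` is a string attractor of the bi-infinite word `x`: every nonempty factor
has an occurrence crossing a position of `Γ`. -/
def IsAttractorZ {A : Type*} (x : ℤ → A) (Γ : Set ℤ) : Prop :=
  ∀ w : List A, w ≠ [] → IsFactorZ x w →
    ∃ i : ℤ, occursAt x w i ∧ ∃ p ∈ Γ, i ≤ p ∧ p < i + (w.length : ℤ)

/-- The span `sup Γ - inf Γ` of a set of integers (`⊤` when unbounded). -/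
noncomputable def setSpan (Γ : Set ℤ) : ℕ∞ :=
  ⨆ a ∈ Γ, ⨆ b ∈ Γ, ((b - a).toNat : ℕ∞)

/-- The string attractor span of a bi-infinite word. -/
noncomputable def wordSpan {A : Type*} (x : ℤ → A) : ℕ∞ :=
  ⨅ Γ ∈ {Γ : Set ℤ | IsAttractorZ x Γ}, setSpan Γ

/-- The factor complexity of a bi-infinite word. -/
noncomputable def complexityZ {A : Type*} (x : ℤ → A) (n : ℕ) : ℕ :=
  Nat.card {w : List A // w.length = n ∧ IsFactorZ x w}

/-- The shift `S^k`. -/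
def shiftZ {A : Type*} (k : ℤ) (x : ℤ → A) : ℤ → A := fun i => x (i + k)

def PositivelyPeriodicZ {A : Type*} (x : ℤ → A) : Prop :=
  ∃ (N : ℤ) (p : ℕ), 1 ≤ p ∧ ∀ n : ℤ, N ≤ n → x n = x (n + (p : ℤ))

def NegativelyPeriodicZ {A : Type*} (x : ℤ → A) : Prop :=
  ∃ (N : ℤ) (p : ℕ), 1 ≤ p ∧ ∀ n : ℤ, n ≤ N → x n = x (n - (p : ℤ))

def EventuallyPeriodicZ {A : Type*} (x : ℤ → A) : Prop :=
  PositivelyPeriodicZ x ∨ NegativelyPeriodicZ x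

def AperiodicZ {A : Type*} (x : ℤ → A) : Prop := ¬ EventuallyPeriodicZ x

def PurelyPeriodicZ {A : Type*} (x : ℤ → A) : Prop :=
  ∃ p : ℕ, 1 ≤ p ∧ ∀ n : ℤ, x n = x (n + (p : ℤ))

def LeftSpecialZ {A : Type*} (x : ℤ → A) (u : List A) : Prop :=
  ∃ a b : A, a ≠ b ∧ IsFactorZ x (a :: u) ∧ IsFactorZ x (b :: u)

def RightSpecialZ {A : Type*} (x : ℤ → A) (u : List A) : Prop :=
  ∃ a b : A, a ≠ b ∧ IsFactorZ x (u ++ [a]) ∧ IsFactorZ x (u ++ [b])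

def BispecialZ {A : Type*} (x : ℤ → A) (u : List A) : Prop :=
  LeftSpecialZ x u ∧ RightSpecialZ x u

/-- A bi-infinite word over `{0,1}` is Sturmian if it is aperiodic with complexity `n + 1`. -/
def SturmianZ (x : ℤ → Fin 2) : Prop :=
  AperiodicZ x ∧ ∀ n : ℕ, complexityZ x n = n + 1

/-- `x_{[-n, n+1]} = r_n(x) 01 l_n(x)` for all `n`. -/
def UpperCharacteristic (x : ℤ → Fin 2) : Prop :=
  SturmianZ x ∧ ∀ n : ℕ, ∃ r l : List (Fin 2),
    r.length = n ∧ RightSpecialZ x r ∧ l.length = n ∧ LeftSpecialZ x l ∧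
    subwordZ x (-(n : ℤ)) (2 * n + 2) = r ++ [0, 1] ++ l

/-- `x_{[-n, n+1]} = r_n(x) 10 l_n(x)` for all `n`. -/
def LowerCharacteristic (x : ℤ → Fin 2) : Prop :=
  SturmianZ x ∧ ∀ n : ℕ, ∃ r l : List (Fin 2),
    r.length = n ∧ RightSpecialZ x r ∧ l.length = n ∧ LeftSpecialZ x l ∧
    subwordZ x (-(n : ℤ)) (2 * n + 2) = r ++ [1, 0] ++ l

def CharacteristicSturmian (x : ℤ → Fin 2) : Prop :=
  UpperCharacteristic x ∨ LowerCharacteristic x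

def QuasiSturmianZ {A : Type*} (x : ℤ → A) : Prop :=
  AperiodicZ x ∧ ∃ (n₀ k : ℕ), 1 ≤ k ∧ ∀ n : ℕ, n₀ ≤ n → complexityZ x n = n + k

/-- Starting position in `φ(x)` of the image `φ(x_i)` (image of `x_0` starts at `0`). -/
def blockStart {A B : Type*} (φ : A → List B) (x : ℤ → A) (i : ℤ) : ℤ :=
  if 0 ≤ i then ((List.range i.toNat).map fun j => ((φ (x (j : ℤ))).length : ℤ)).sum
  else -((List.range (-i).toNat).map fun j => ((φ (x (-(j : ℤ) - 1))).length : ℤ)).sum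

/-- `y` is the image of the bi-infinite word `x` under the substitution `φ`
(with images of letters nonempty). -/
def IsSubstImage {A B : Type*} (φ : A → List B) (x : ℤ → A) (y : ℤ → B) : Prop :=
  (∀ a : A, φ a ≠ []) ∧
  ∀ i : ℤ, subwordZ y (blockStart φ x i) (φ (x i)).length = φ (x i)

/-- `φ_x(Γ)`: positions of `φ(x)` occupied by images of letters at positions in `Γ`. -/
def substSupp {A B : Type*} (φ : A → List B) (x : ℤ → A) (Γ : Set ℤ) : Set ℤ :=
  {n : ℤ | ∃ i ∈ Γ, blockStart φ x i ≤ n ∧ n < blockStart φ x i + ((φ (x i)).length : ℤ)}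

/-- `φ_x^{-1}(Γ)`: positions of letters of `x` whose image blocks in `φ(x)` meet `Γ`. -/
def substPreimage {A B : Type*} (φ : A → List B) (x : ℤ → A) (Γ : Set ℤ) : Set ℤ :=
  {i : ℤ | ∃ n ∈ Γ, blockStart φ x i ≤ n ∧ n < blockStart φ x i + ((φ (x i)).length : ℤ)}

/-- The set of occurrences of `w` in the finite word `u`. -/
def occSetF {B : Type*} (u w : List B) : Set ℕ :=
  {i : ℕ | i + w.length ≤ u.length ∧ (u.drop i).take w.length = w}

/-- `φ` is a return morphism for `w`. -/
def IsReturnMorphism {A B : Type*} (φ : A → List B) (w : List B) : Prop :=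
  w ≠ [] ∧ Function.Injective φ ∧ (∀ a : A, φ a ≠ []) ∧
  ∀ a : A, occSetF (w ++ φ a) w = {0, (φ a).length}

def listPow {A : Type*} (u : List A) : ℕ → List A
  | 0 => []
  | n + 1 => u ++ listPow u n

/-- A substitution on `{0,1}` is acyclic if `φ(0)` and `φ(1)` are not powers of one word. -/
def AcyclicSubst {A : Type*} (φ : Fin 2 → List A) : Prop :=
  ¬ ∃ (u : List A) (m n : ℕ), φ 0 = listPow u m ∧ φ 1 = listPow u n

/-- The substitution `L₀ : 0 ↦ 0, 1 ↦ 01`. -/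
def Lzero : Fin 2 → List (Fin 2) := fun a => if a = 0 then [0] else [0, 1]

/-- The substitution `L₁ : 0 ↦ 10, 1 ↦ 1`. -/
def Lone : Fin 2 → List (Fin 2) := fun a => if a = 0 then [1, 0] else [1]

/-- A finite word has period `r`. -/
def PeriodicF {A : Type*} (w : List A) (r : ℕ) : Prop :=
  ∀ i : ℕ, i + r < w.length → w[i]? = w[i + r]?

/-- `Γ` is a string attractor of the finite word `w`. -/
def IsAttractorF {A : Type*} (w : List A) (Γ : Set ℕ) : Prop :=
  ∀ u : List A, u ≠ [] → u <:+: w →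
    ∃ i : ℕ, i + u.length ≤ w.length ∧ (w.drop i).take u.length = u ∧
      ∃ p ∈ Γ, i ≤ p ∧ p < i + u.length

def RecurrentZ {A : Type*} (x : ℤ → A) : Prop :=
  ∀ w : List A, IsFactorZ x w → {i : ℤ | occursAt x w i}.Infinite

def UniformlyRecurrentZ {A : Type*} (x : ℤ → A) : Prop :=
  ∀ w : List A, IsFactorZ x w →
    ∃ n : ℕ, ∀ i : ℤ, ∃ j : ℤ, i ≤ j ∧ j + (w.length : ℤ) ≤ i + (n : ℤ) ∧ occursAt x w j

def ModuloRecurrentZ {A : Type*} (x : ℤ → A) : Prop :=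
  ∀ w : List A, IsFactorZ x w → ∀ k : ℕ, 1 ≤ k → ∀ r : ℤ,
    ∃ i : ℤ, occursAt x w i ∧ (k : ℤ) ∣ (i - r)

/-- A shift space: closed (product topology, `A` discrete) and shift-invariant. -/
def IsShiftSpace {A : Type*} (X : Set (ℤ → A)) : Prop :=
  @IsClosed _ (@Pi.topologicalSpace ℤ (fun _ => A) (fun _ => ⊥)) X ∧ shiftZ 1 '' X = X

def IsAttractorX {A : Type*} (X : Set (ℤ → A)) (Γ : Set ℤ) : Prop :=
  ∀ x ∈ X, IsAttractorZ x Γ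

def MinimalShift {A : Type*} (X : Set (ℤ → A)) : Prop :=
  IsShiftSpace X ∧ ∀ Y ⊆ X, IsShiftSpace Y → Y = ∅ ∨ Y = X

/-- The orbit closure of a bi-infinite word (product topology, `A` discrete). -/
def orbitClosureZ {A : Type*} (x : ℤ → A) : Set (ℤ → A) :=
  @closure _ (@Pi.topologicalSpace ℤ (fun _ => A) (fun _ => ⊥)) {y | ∃ k : ℤ, y = shiftZ k x}

/-! In a minimal shift space over a finite alphabet all points have the same factors, and by
compactness there is, for each `L`, a length `R L` such that every factor of length at most `L`
occurs in every window of length `R L` of every point. One window `[q L, q L + R L)` per length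
`L` is then a string attractor, and it is as sparse as required once the windows are pushed so
far to the right that `R 0 + ⋯ + R L ≤ η (q L)`. -/

open Filter Set

section Shift

variable {A : Type*}

/-- `subwordZ` casts `List.range n` to `List ℤ` through the list monad; this is the plain form. -/
theorem subwordZ_eq_map (x : ℤ → A) (i : ℤ) (n : ℕ) :
    subwordZ x i n = (List.range n).map fun j : ℕ => x (i + j) := by
  simp [subwordZ, ← List.map_eq_flatMap]

theorem shiftZ_shiftZ (a b : ℤ) (x : ℤ → A) : shiftZ a (shiftZ b x) = shiftZ (a + b) x := by
  funext i
  simp [shiftZ, add_assoc, add_comm a]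

theorem shiftZ_zero (x : ℤ → A) : shiftZ 0 x = x := by
  funext i
  simp [shiftZ]

theorem occursAt_shiftZ (k : ℤ) (y : ℤ → A) (w : List A) (i : ℤ) :
    occursAt (shiftZ k y) w i ↔ occursAt y w (i + k) := by
  simp only [occursAt, subwordZ_eq_map, shiftZ, add_right_comm]

theorem isFactorZ_shiftZ (k : ℤ) (y : ℤ → A) (w : List A) :
    IsFactorZ (shiftZ k y) w ↔ IsFactorZ y w := by
  simp only [IsFactorZ, occursAt_shiftZ]
  exact (Equiv.addRight k).exists_congr_left.trans (by simp)

theorem occursAt_iff (y : ℤ → A) (w : List A) (i : ℤ) :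
    occursAt y w i ↔ ∀ (j : ℕ) (hj : j < w.length), y (i + j) = w[j] := by
  simp [occursAt, subwordZ_eq_map, List.ext_getElem_iff]

theorem IsShiftSpace.shiftZ_mem {X : Set (ℤ → A)} (hX : IsShiftSpace X) (k : ℤ) {x : ℤ → A}
    (hx : x ∈ X) : shiftZ k x ∈ X := by
  induction k using Int.induction_on with
  | zero => rwa [shiftZ_zero]
  | succ n ih =>
    rw [add_comm, ← shiftZ_shiftZ, ← hX.2]
    exact mem_image_of_mem _ ih
  | pred n ih =>
    rw [← hX.2] at ih
    obtain ⟨x', hx', hx'x⟩ := ih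
    rwa [sub_eq_neg_add, ← shiftZ_shiftZ, ← hx'x, shiftZ_shiftZ, neg_add_cancel, shiftZ_zero]

end Shift

section Topology

variable {A : Type*} [TopologicalSpace A] [DiscreteTopology A]

theorem isOpen_setOf_occursAt (w : List A) (i : ℤ) : IsOpen {y : ℤ → A | occursAt y w i} := by
  have : {y : ℤ → A | occursAt y w i} = ⋂ j : Fin w.length, (fun y => y (i + j)) ⁻¹' {w[j]} := by
    ext y
    simp [occursAt_iff, Fin.forall_iff]
  rw [this]
  exact isOpen_iInter_of_finite fun j => (isOpen_discrete _).preimage (continuous_apply _)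

theorem isOpen_setOf_isFactorZ (w : List A) : IsOpen {y : ℤ → A | IsFactorZ y w} := by
  simpa only [IsFactorZ, ofPred_exists] using isOpen_iUnion fun i => isOpen_setOf_occursAt w i

theorem IsCompact.exists_uniform_window {X : Set (ℤ → A)} (hX : IsCompact X) {W : Set (List A)}
    (hW : W.Finite) (h : ∀ y ∈ X, ∀ w ∈ W, IsFactorZ y w) :
    ∃ N : ℕ, ∀ y ∈ X, ∀ w ∈ W, ∃ j : ℤ, -N ≤ j ∧ j < N ∧ occursAt y w j := by
  let U : ℕ → Set (ℤ → A) := fun N => ⋂ w ∈ W, ⋃ j ∈ Ico (-(N : ℤ)) N, {y | occursAt y w j}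
  have mem_U : ∀ N y, y ∈ U N ↔ ∀ w ∈ W, ∃ j : ℤ, -N ≤ j ∧ j < N ∧ occursAt y w j := by
    simp [U, and_assoc]
  have hUo : ∀ N, IsOpen (U N) := fun N =>
    hW.isOpen_biInter fun w _ => isOpen_biUnion fun j _ => isOpen_setOf_occursAt w j
  have hUmono : Monotone U := by
    intro M N hMN y
    simp only [mem_U]
    exact fun hy w hw => (hy w hw).imp fun j hj => ⟨by omega, by omega, hj.2.2⟩
  have hcover : X ⊆ ⋃ N, U N := by
    intro y hy
    have : ∀ᶠ N : ℕ in atTop, ∀ w ∈ W, ∃ j : ℤ, -N ≤ j ∧ j < N ∧ occursAt y w j := by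
      refine (eventually_all_finite hW).2 fun w hw => ?_
      obtain ⟨j, hj⟩ := h y hy w hw
      filter_upwards [eventually_ge_atTop (j.natAbs + 1)] with N hN
      exact ⟨j, by omega, by omega, hj⟩
    obtain ⟨N, hN⟩ := this.exists
    exact mem_iUnion.2 ⟨N, (mem_U N y).2 hN⟩
  obtain ⟨N, hN⟩ := hX.elim_directed_cover U hUo hcover hUmono.directed_le
  exact ⟨N, fun y hy => (mem_U N y).1 (hN hy)⟩

end Topology

section Minimal

variable {A : Type*}

theorem MinimalShift.isFactorZ {X : Set (ℤ → A)} (hX : MinimalShift X) {x y : ℤ → A}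
    {w : List A} (hx : x ∈ X) (hxw : IsFactorZ x w) (hy : y ∈ X) : IsFactorZ y w := by
  let : TopologicalSpace A := ⊥
  have : DiscreteTopology A := ⟨rfl⟩
  let Y := X ∩ {z | IsFactorZ z w}ᶜ
  have hY : IsShiftSpace Y := by
    refine ⟨hX.1.1.inter (isOpen_setOf_isFactorZ w).isClosed_compl, ?_⟩
    ext z
    constructor
    · rintro ⟨z, ⟨hzX, hzw⟩, rfl⟩
      exact ⟨hX.1.shiftZ_mem 1 hzX, by simpa [isFactorZ_shiftZ] using hzw⟩
    · rintro ⟨hzX, hzw⟩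
      refine ⟨shiftZ (-1) z, ⟨hX.1.shiftZ_mem (-1) hzX, by simpa [isFactorZ_shiftZ] using hzw⟩, ?_⟩
      rw [shiftZ_shiftZ, add_neg_cancel, shiftZ_zero]
  rcases hX.2 Y inter_subset_left hY with hYe | hYX
  · by_contra hyw
    exact (eq_empty_iff_forall_notMem.1 hYe) y ⟨hy, hyw⟩
  · exact absurd hxw (hYX ▸ hx : x ∈ Y).2

theorem MinimalShift.exists_uniform_window [Finite A] {X : Set (ℤ → A)} (hX : MinimalShift X)
    (L : ℕ) :
    ∃ N : ℕ, ∀ y ∈ X, ∀ w : List A, w.length ≤ L → IsFactorZ y w →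
      ∀ i : ℤ, ∃ j : ℤ, i ≤ j ∧ j < i + N ∧ occursAt y w j := by
  let : TopologicalSpace A := ⊥
  have : DiscreteTopology A := ⟨rfl⟩
  let W := {w : List A | w.length ≤ L ∧ ∃ x ∈ X, IsFactorZ x w}
  have hW : W.Finite := (List.finite_length_le A L).subset fun w hw => hw.1
  obtain ⟨N, hN⟩ := hX.1.1.isCompact.exists_uniform_window hW
    fun y hy w ⟨_, x, hx, hxw⟩ => hX.isFactorZ hx hxw hy
  refine ⟨2 * N, fun y hy w hwL hyw i => ?_⟩
  obtain ⟨j, hj₁, hj₂, hj⟩ := hN _ (hX.1.shiftZ_mem (i + N) hy) w ⟨hwL, y, hy, hyw⟩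
  exact ⟨j + (i + N), by omega, by omega, (occursAt_shiftZ _ _ _ _).1 hj⟩

theorem isAttractorX_iUnion_Ico {X : Set (ℤ → A)} {R : ℕ → ℕ}
    (hR : ∀ L, ∀ y ∈ X, ∀ w : List A, w.length ≤ L → IsFactorZ y w →
      ∀ i : ℤ, ∃ j : ℤ, i ≤ j ∧ j < i + R L ∧ occursAt y w j) (q : ℕ → ℕ) :
    IsAttractorX X (⋃ L, Ico (q L : ℤ) (q L + R L)) := by
  intro y hy w hw hyw
  obtain ⟨j, hqj, hjR, hj⟩ := hR w.length y hy w le_rfl hyw (q w.length)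
  have : 0 < w.length := List.length_pos_iff.2 hw
  exact ⟨j, hj, j, mem_iUnion.2 ⟨w.length, hqj, hjR⟩, le_rfl, by omega⟩

end Minimal

theorem exists_sparse_iUnion_Ico (R : ℕ → ℕ) {η : ℕ → ℕ} (hmono : Monotone η)
    (htend : Tendsto η atTop atTop) :
    ∃ q : ℕ → ℕ, ∀ n : ℕ, ((⋃ k, Ico (q k : ℤ) (q k + R k)) ∩ Icc (-(n : ℤ)) n).ncard ≤ η n := by
  obtain ⟨q, hq, hqη⟩ := extraction_forall_of_eventually fun k =>
    htend.eventually_ge_atTop (∑ j ∈ Finset.range (k + 1), R j)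
  refine ⟨q, fun n => ?_⟩
  let F := (Finset.range (n + 1)).filter (q · ≤ n)
  have hsub : (⋃ k, Ico (q k : ℤ) (q k + R k)) ∩ Icc (-(n : ℤ)) n ⊆
      ⋃ k ∈ F, Ico (q k : ℤ) (q k + R k) := by
    rintro m ⟨hm, -, hmn⟩
    obtain ⟨k, hqk, hkR⟩ := mem_iUnion.1 hm
    have : k ≤ q k := hq.id_le k
    simp only [mem_iUnion, F, Finset.mem_filter, Finset.mem_range]
    exact ⟨k, ⟨by omega, by omega⟩, hqk, hkR⟩
  have hsum : ∑ k ∈ F, R k ≤ η n := by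
    rcases F.eq_empty_or_nonempty with hF | hF
    · simp [hF]
    · calc ∑ k ∈ F, R k ≤ ∑ k ∈ Finset.range (F.max' hF + 1), R k :=
            Finset.sum_le_sum_of_subset fun k hk => Finset.mem_range_succ_iff.2 (F.le_max' k hk)
        _ ≤ η (q (F.max' hF)) := hqη _
        _ ≤ η n := hmono (Finset.mem_filter.1 (F.max'_mem hF)).2
  calc _ ≤ (⋃ k ∈ F, Ico (q k : ℤ) (q k + R k)).ncard :=
        ncard_le_ncard hsub (F.finite_toSet.biUnion fun _ _ => finite_Ico _ _)
    _ ≤ ∑ k ∈ F, (Ico (q k : ℤ) (q k + R k)).ncard := F.set_ncard_biUnion_le _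
    _ = ∑ k ∈ F, R k := by simp [← Finset.coe_Ico, ncard_coe_finset, Int.card_Ico]
    _ ≤ η n := hsum

/-- Every minimal shift space has arbitrarily sparse string attractors. -/
theorem minimal_shift_sparse_attractor {A : Type*} [Fintype A] (X : Set (ℤ → A))
    (hX : MinimalShift X) (η : ℕ → ℕ) (hmono : Monotone η)
    (htend : Filter.Tendsto η Filter.atTop Filter.atTop) :
    ∃ Γ : Set ℤ, IsAttractorX X Γ ∧
      ∀ n : ℕ, (Γ ∩ Set.Icc (-(n : ℤ)) (n : ℤ)).ncard ≤ η n := by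
  choose R hR using hX.exists_uniform_window
  obtain ⟨q, hq⟩ := exists_sparse_iUnion_Ico R hmono htend
  exact ⟨_, isAttractorX_iUnion_Ico hR q, hq⟩
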